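/- Let r ≥ 0 be an integer and let W be the real vector space with basis {v_0, …, v_r, w_0, …, w_r}, graded so that v_i has degree i and w_i has degree i+1. Define linear operators L and Λ on W by: L(v_i) = v_{i+1} for i < r, L(v_r) = w_r, L(w_i) = w_{i+1} for i < r, L(w_r) = 0; and Λ(v_i) = i(r+2−i)·v_{i−1} (so Λ(v_0) = 0), Λ(w_i) = (r+1)·v_i + i(r−i)·w_{i−1} (so Λ(w_0) = (r+1)·v_0). Then for every homogeneous element x ∈ W of degree q, one has (Λ∘L − L∘Λ)(x) = (r+1−2q)·x. -/
import Mathlib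


/-- The free real vector space on the symbols `v_0, …, v_r, w_0, …, w_r`. -/
abbrev W (r : ℕ) : Type := (Fin (r + 1) ⊕ Fin (r + 1)) →₀ ℝ

/-- The basis vector `v_i`. -/
noncomputable def v (r : ℕ) (i : Fin (r + 1)) : W r := Finsupp.single (Sum.inl i) 1

/-- The basis vector `w_i`. -/
noncomputable def w (r : ℕ) (i : Fin (r + 1)) : W r := Finsupp.single (Sum.inr i) 1

/-- The degree: `deg v_i = i` and `deg w_i = i + 1`. -/
def deg (r : ℕ) : Fin (r + 1) ⊕ Fin (r + 1) → ℕ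
  | Sum.inl i => i
  | Sum.inr i => (i : ℕ) + 1

/-- Value of the operator `L` on basis vectors:
`L(v_i) = v_{i+1}` for `i < r`, `L(v_r) = w_r`, `L(w_i) = w_{i+1}` for `i < r`, `L(w_r) = 0`. -/
noncomputable def Lb (r : ℕ) : Fin (r + 1) ⊕ Fin (r + 1) → W r
  | Sum.inl i =>
      if h : (i : ℕ) < r then v r ⟨(i : ℕ) + 1, by omega⟩ else w r ⟨r, by omega⟩
  | Sum.inr i =>
      if h : (i : ℕ) < r then w r ⟨(i : ℕ) + 1, by omega⟩ else 0

/-- Value of the operator `Λ` on basis vectors: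
`Λ(v_i) = i(r+2−i)·v_{i−1}` (so `Λ(v_0) = 0`) and
`Λ(w_i) = (r+1)·v_i + i(r−i)·w_{i−1}` (so `Λ(w_0) = (r+1)·v_0`). -/
noncomputable def Λb (r : ℕ) : Fin (r + 1) ⊕ Fin (r + 1) → W r
  | Sum.inl i =>
      (((i : ℕ) * (r + 2 - (i : ℕ)) : ℕ) : ℝ) • v r ⟨(i : ℕ) - 1, by omega⟩
  | Sum.inr i =>
      ((r : ℝ) + 1) • v r i +
        (((i : ℕ) * (r - (i : ℕ)) : ℕ) : ℝ) • w r ⟨(i : ℕ) - 1, by omega⟩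

/-- The linear operator `L`. -/
noncomputable def Lop (r : ℕ) : W r →ₗ[ℝ] W r :=
  Finsupp.lsum ℝ fun x => LinearMap.toSpanSingleton ℝ (W r) (Lb r x)

/-- The linear operator `Λ`. -/
noncomputable def Λop (r : ℕ) : W r →ₗ[ℝ] W r :=
  Finsupp.lsum ℝ fun x => LinearMap.toSpanSingleton ℝ (W r) (Λb r x)

lemma Lop_single (r : ℕ) (b) (c : ℝ) : Lop r (Finsupp.single b c) = c • Lb r b := by simp [Lop]
lemma Λop_single (r : ℕ) (b) (c : ℝ) : Λop r (Finsupp.single b c) = c • Λb r b := by simp [Λop]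

lemma key (r : ℕ) (b : Fin (r + 1) ⊕ Fin (r + 1)) :
    Λop r (Lop r (Finsupp.single b (1:ℝ))) - Lop r (Λop r (Finsupp.single b 1))
      = ((r : ℝ) + 1 - 2 * (deg r b : ℝ)) • Finsupp.single b 1 := by
  rcases b with i | i
  · by_cases h : (i : ℕ) < r
    · by_cases hi : (i : ℕ) = 0
      · have c0 : ((i : ℕ) * (r + 2 - (i : ℕ)) : ℕ) = 0 := by simp [hi]
        simp only [Lop_single, Λop_single, one_smul, Lb, Λb, h, dif_pos, v, map_smul,
          Finsupp.smul_single, smul_eq_mul, mul_one, deg, Nat.add_sub_cancel, Fin.eta, c0,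
          Nat.cast_zero, zero_smul, map_zero, sub_zero, smul_zero]
        congr 1
        rw [Nat.cast_mul, Nat.cast_sub (by omega)]
        push_cast [hi]
        ring
      · have h2 : (i : ℕ) - 1 < r := by omega
        have h3 : (i : ℕ) - 1 + 1 = (i : ℕ) := by omega
        simp only [Lop_single, Λop_single, one_smul, Lb, Λb, h, h2, dif_pos, v, map_smul,
          Finsupp.smul_single, smul_eq_mul, mul_one, deg, Nat.add_sub_cancel, h3, Fin.eta]
        rw [← Finsupp.single_sub]
        congr 1
        rw [Nat.cast_mul, Nat.cast_sub (by omega), Nat.cast_mul, Nat.cast_sub (by omega)]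
        push_cast
        ring
    · -- i = r
      have hr : (i : ℕ) = r := by omega
      have e : (⟨r, Nat.lt_succ_self r⟩ : Fin (r + 1)) = i := Fin.ext (by simp [hr])
      rw [Lop_single, Λop_single, one_smul, one_smul]
      have hL : Lb r (Sum.inl i)
          = Finsupp.single (Sum.inr (⟨r, Nat.lt_succ_self r⟩ : Fin (r + 1))) (1:ℝ) := by
        simp [Lb, h, w]
      rw [hL, Λop_single, one_smul]
      have hΛ2 : Λb r (Sum.inr (⟨r, Nat.lt_succ_self r⟩ : Fin (r + 1)))
          = ((r : ℝ) + 1) • Finsupp.single (Sum.inl i) (1:ℝ) := by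
        simp [Λb, v, w, e]
      rw [hΛ2]
      have hΛ : Λb r (Sum.inl i)
          = (((r * 2 : ℕ)) : ℝ) • Finsupp.single (Sum.inl (⟨(i:ℕ) - 1, by omega⟩ : Fin (r+1))) (1:ℝ) := by
        simp [Λb, v, hr]
      rw [hΛ, map_smul]
      rcases Nat.eq_zero_or_pos r with h0 | h0
      · subst h0
        simp only [Nat.zero_mul, Nat.cast_zero, zero_smul, sub_zero, Finsupp.smul_single,
          smul_eq_mul, mul_one, deg, hr, Nat.cast_zero]
        congr 1
        norm_num
      · have hL2 : Lop r (Finsupp.single (Sum.inl (⟨(i:ℕ) - 1, by omega⟩ : Fin (r+1))) (1:ℝ))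
            = Finsupp.single (Sum.inl i) 1 := by
          rw [Lop_single, one_smul]
          have h2 : (i : ℕ) - 1 < r := by omega
          have e2 : (⟨(i:ℕ) - 1 + 1, by omega⟩ : Fin (r + 1)) = i := Fin.ext (by simp; omega)
          simp [Lb, h2, v, e2]
        rw [hL2, Finsupp.smul_single, Finsupp.smul_single, smul_eq_mul, mul_one, smul_eq_mul,
          mul_one, ← Finsupp.single_sub]
        simp only [deg, hr]
        push_cast
        ring_nf
        simp
  · -- b = inr i
    by_cases h : (i : ℕ) < r
    · by_cases hi : (i : ℕ) = 0
      · have c0 : ((i : ℕ) * (r - (i : ℕ)) : ℕ) = 0 := by simp [hi]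
        simp only [Lop_single, Λop_single, one_smul, Lb, Λb, h, dif_pos, v, w, map_smul,
          map_add, Finsupp.smul_single, smul_eq_mul, mul_one, deg, Nat.add_sub_cancel, Fin.eta,
          c0, Nat.cast_zero, zero_smul, map_zero, add_zero, smul_zero]
        rw [add_sub_cancel_left]
        congr 1
        rw [Nat.cast_mul, Nat.cast_sub (by omega)]
        push_cast [hi]
        ring
      · have h2 : (i : ℕ) - 1 < r := by omega
        have h3 : (i : ℕ) - 1 + 1 = (i : ℕ) := by omega
        simp only [Lop_single, Λop_single, one_smul, Lb, Λb, h, h2, dif_pos, v, w, map_smul,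
          map_add, Finsupp.smul_single, smul_eq_mul, mul_one, deg, Nat.add_sub_cancel, h3,
          Fin.eta]
        rw [add_sub_add_left_eq_sub, ← Finsupp.single_sub]
        congr 1
        rw [Nat.cast_mul, Nat.cast_sub (by omega), Nat.cast_mul, Nat.cast_sub (by omega)]
        push_cast
        ring
    · have hr : (i : ℕ) = r := by omega
      have e : (⟨r, Nat.lt_succ_self r⟩ : Fin (r + 1)) = i := Fin.ext (by simp [hr])
      have c0 : ((i : ℕ) * (r - (i : ℕ)) : ℕ) = 0 := by simp [hr]
      simp only [Lop_single, Λop_single, one_smul, Lb, Λb, h, dif_neg, v, w, map_smul, map_add,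
        dite_false, map_zero, Finsupp.smul_single, smul_eq_mul, mul_one, deg, c0, Nat.cast_zero,
        zero_smul, add_zero, smul_zero, zero_sub, e]
      rw [← Finsupp.single_neg]
      push_cast [hr]
      ring

theorem stmt19 (r q : ℕ) (x : W r) (hx : ∀ b ∈ x.support, deg r b = q) :
    Λop r (Lop r x) - Lop r (Λop r x) = ((r : ℝ) + 1 - 2 * (q : ℝ)) • x := by
  conv_lhs => rw [← Finsupp.sum_single x, map_finsuppSum, map_finsuppSum, map_finsuppSum,
    map_finsuppSum]
  conv_rhs => rw [← Finsupp.sum_single x, Finsupp.smul_sum]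
  rw [Finsupp.sum, Finsupp.sum, Finsupp.sum, ← Finset.sum_sub_distrib]
  refine Finset.sum_congr rfl fun b hb => ?_
  have hb' : deg r b = q := hx b hb
  have hs : Finsupp.single b (x b) = (x b) • Finsupp.single b (1:ℝ) := by simp
  rw [hs, map_smul, map_smul, map_smul, map_smul, ← smul_sub, key r b, hb', smul_comm]
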